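/- Let f : ℝ^d → ℝ be L-smooth and u > 0. Then for all x, ‖∇f(x) - ∇f^u(x)‖ ≤ u L √d, where f^u(x) = E_{z ~ N(0,I_d)}[f(x + u z)]. -/

import Mathlib

open MeasureTheory ProbabilityTheory

noncomputable def stdGaussian (d : ℕ) : Measure (EuclideanSpace ℝ (Fin d)) :=
  Measure.map (WithLp.toLp 2) (Measure.pi fun _ => gaussianReal 0 1)

noncomputable def smoothed (d : ℕ) (f : EuclideanSpace ℝ (Fin d) → ℝ) (u : ℝ)
    (x : EuclideanSpace ℝ (Fin d)) : ℝ :=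
  ∫ z, f (x + u • z) ∂(stdGaussian d)

/-!
Differentiating under the integral sign gives `∇f^u(x) = E[∇f(x + u z)]`; this is legitimate
because an `L`-smooth `f` grows at most quadratically while `N(0, I_d)` has a finite second
moment. Hence `‖∇f(x) - ∇f^u(x)‖ ≤ E‖∇f(x) - ∇f(x + u z)‖ ≤ L u E‖z‖`, and by Jensen
`E‖z‖ ≤ √(E‖z‖²) = √d`.
-/

open scoped NNReal RealInnerProductSpace

lemma norm_gradient_sub_gradient {E : Type*} [NormedAddCommGroup E] [InnerProductSpace ℝ E]
    [CompleteSpace E] (f g : E → ℝ) (x y : E) :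
    ‖gradient f x - gradient g y‖ = ‖fderiv ℝ f x - fderiv ℝ g y‖ := by
  rw [gradient, gradient, ← map_sub, LinearIsometryEquiv.norm_map]

lemma nonneg_of_forall_norm_sub_le_mul_norm_sub {E G : Type*} [NormedAddCommGroup E]
    [Nontrivial E] [NormedAddCommGroup G] {g : E → G} {L : ℝ}
    (h : ∀ x y, ‖g x - g y‖ ≤ L * ‖x - y‖) : 0 ≤ L := by
  obtain ⟨x, y, hxy⟩ := exists_pair_ne E
  exact nonneg_of_mul_nonneg_left ((norm_nonneg _).trans (h x y))
    (norm_pos_iff.2 (sub_ne_zero.2 hxy))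

section Smoothing

variable {E F : Type*} [NormedAddCommGroup E] [NormedSpace ℝ E] [NormedAddCommGroup F]
  [NormedSpace ℝ F] {K : ℝ≥0} {f : E → F}

lemma norm_sub_le_of_lipschitzWith_fderiv (hf : Differentiable ℝ f)
    (hf' : LipschitzWith K (fderiv ℝ f)) (x y : E) :
    ‖f y - f x‖ ≤ (‖fderiv ℝ f x‖ + K * ‖y - x‖) * ‖y - x‖ := by
  refine (convex_closedBall x ‖y - x‖).norm_image_sub_le_of_norm_fderiv_le
    (fun w _ => hf w) (fun w hw => ?_) (Metric.mem_closedBall_self (norm_nonneg _))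
    (by rw [Metric.mem_closedBall, dist_eq_norm])
  rw [Metric.mem_closedBall, dist_eq_norm] at hw
  calc ‖fderiv ℝ f w‖ ≤ ‖fderiv ℝ f x‖ + ‖fderiv ℝ f w - fderiv ℝ f x‖ := norm_le_insert' _ _
    _ ≤ ‖fderiv ℝ f x‖ + K * ‖y - x‖ := by
      gcongr
      exact (hf'.norm_sub_le w x).trans (by gcongr)

variable [MeasurableSpace E] [BorelSpace E] [SecondCountableTopology E] {μ : Measure E} {u : ℝ}

noncomputable def smoothing (μ : Measure E) (f : E → F) (u : ℝ) (x : E) : F :=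
  ∫ z, f (x + u • z) ∂μ

lemma LipschitzWith.integrable_comp_add_smul {G : Type*} [NormedAddCommGroup G]
    [IsFiniteMeasure μ] {g : E → G} (hg : LipschitzWith K g) (hμ : Integrable id μ) (x : E) :
    Integrable (fun z => g (x + u • z)) μ := by
  refine Integrable.mono' ((integrable_const ‖g x‖).add (hμ.norm.const_mul (K * |u|)))
    (hg.continuous.comp (by fun_prop)).aestronglyMeasurable (.of_forall fun z => ?_)
  calc ‖g (x + u • z)‖ ≤ ‖g x‖ + ‖g (x + u • z) - g x‖ := norm_le_insert' _ _
    _ ≤ ‖g x‖ + K * (|u| * ‖z‖) := by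
      gcongr
      simpa [norm_smul] using hg.norm_sub_le (x + u • z) x
    _ = _ := by simp [mul_assoc]

lemma integrable_comp_add_smul_of_lipschitzWith_fderiv [IsFiniteMeasure μ]
    (hf : Differentiable ℝ f) (hf' : LipschitzWith K (fderiv ℝ f)) (hμ : MemLp id 2 μ) (x : E) :
    Integrable (fun z => f (x + u • z)) μ := by
  have hnorm : Integrable (fun z => ‖z‖) μ := (hμ.integrable one_le_two).norm
  have hsq : Integrable (fun z => ‖z‖ ^ 2) μ := hμ.integrable_norm_pow two_ne_zero
  refine Integrable.mono'
    (((integrable_const ‖f x‖).add (hnorm.const_mul (‖fderiv ℝ f x‖ * |u|))).add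
      (hsq.const_mul (K * |u| ^ 2)))
    (hf.continuous.comp (by fun_prop)).aestronglyMeasurable (.of_forall fun z => ?_)
  have hstep := norm_sub_le_of_lipschitzWith_fderiv hf hf' x (x + u • z)
  rw [add_sub_cancel_left, norm_smul, Real.norm_eq_abs] at hstep
  calc ‖f (x + u • z)‖ ≤ ‖f x‖ + ‖f (x + u • z) - f x‖ := norm_le_insert' _ _
    _ ≤ ‖f x‖ + (‖fderiv ℝ f x‖ + K * (|u| * ‖z‖)) * (|u| * ‖z‖) := by linarith
    _ = _ := by simp only [Pi.add_apply]; ring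

lemma hasFDerivAt_smoothing [IsFiniteMeasure μ]
    (hf : Differentiable ℝ f) (hf' : LipschitzWith K (fderiv ℝ f)) (hμ : MemLp id 2 μ) (x₀ : E) :
    HasFDerivAt (smoothing μ f u) (∫ z, fderiv ℝ f (x₀ + u • z) ∂μ) x₀ := by
  have hnorm : Integrable (fun z => ‖z‖) μ := (hμ.integrable one_le_two).norm
  refine hasFDerivAt_integral_of_dominated_of_fderiv_le (Metric.ball_mem_nhds x₀ one_pos)
    (F := fun x z => f (x + u • z)) (F' := fun x z => fderiv ℝ f (x + u • z))
    (bound := fun z => ‖fderiv ℝ f x₀‖ + K * (1 + |u| * ‖z‖))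
    (.of_forall fun x => (hf.continuous.comp (by fun_prop)).aestronglyMeasurable)
    (integrable_comp_add_smul_of_lipschitzWith_fderiv hf hf' hμ x₀)
    (hf'.continuous.comp (by fun_prop)).aestronglyMeasurable
    (.of_forall fun z x hx => ?_)
    ((integrable_const _).add (((integrable_const 1).add (hnorm.const_mul |u|)).const_mul K))
    (.of_forall fun z x _ => ?_)
  · rw [Metric.mem_ball, dist_eq_norm] at hx
    have hdist : ‖x + u • z - x₀‖ ≤ 1 + |u| * ‖z‖ := by
      rw [add_sub_right_comm, ← Real.norm_eq_abs, ← norm_smul]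
      exact (norm_add_le _ _).trans (by gcongr)
    calc ‖fderiv ℝ f (x + u • z)‖
        ≤ ‖fderiv ℝ f x₀‖ + ‖fderiv ℝ f (x + u • z) - fderiv ℝ f x₀‖ := norm_le_insert' _ _
      _ ≤ _ := by
        gcongr
        exact (hf'.norm_sub_le _ _).trans (by gcongr)
  · exact (hasFDerivAt_comp_add_right _).2 (hf _).hasFDerivAt

lemma norm_fderiv_sub_fderiv_smoothing_le [CompleteSpace F] [IsProbabilityMeasure μ]
    (hf : Differentiable ℝ f) (hf' : LipschitzWith K (fderiv ℝ f)) (hμ : MemLp id 2 μ) (x : E) :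
    ‖fderiv ℝ f x - fderiv ℝ (smoothing μ f u) x‖ ≤ K * |u| * ∫ z, ‖z‖ ∂μ := by
  have hnorm : Integrable (fun z => ‖z‖) μ := (hμ.integrable one_le_two).norm
  have hint := hf'.integrable_comp_add_smul (u := u) (hμ.integrable one_le_two) x
  rw [(hasFDerivAt_smoothing hf hf' hμ x).fderiv]
  calc ‖fderiv ℝ f x - ∫ z, fderiv ℝ f (x + u • z) ∂μ‖
      = ‖∫ z, (fderiv ℝ f x - fderiv ℝ f (x + u • z)) ∂μ‖ := by
        rw [integral_sub (integrable_const _) hint, integral_const, probReal_univ, one_smul]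
    _ ≤ ∫ z, K * |u| * ‖z‖ ∂μ := by
        refine norm_integral_le_of_norm_le (hnorm.const_mul _) (.of_forall fun z => ?_)
        simpa [norm_smul, mul_assoc] using hf'.norm_sub_le x (x + u • z)
    _ = K * |u| * ∫ z, ‖z‖ ∂μ := integral_const_mul _ _

end Smoothing

section Gaussian

variable {E : Type*} [NormedAddCommGroup E] [InnerProductSpace ℝ E] [FiniteDimensional ℝ E]
  [MeasurableSpace E] [BorelSpace E]

lemma memLp_inner_stdGaussian (v : E) :
    MemLp (fun x => ⟪v, x⟫) 2 (ProbabilityTheory.stdGaussian E) :=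
  (innerSL ℝ v).comp_memLp' IsGaussian.memLp_two_id

lemma integral_inner_sq_stdGaussian (v : E) :
    ∫ x, ⟪v, x⟫ ^ 2 ∂ProbabilityTheory.stdGaussian E = ‖v‖ ^ 2 := by
  have hmean : ∫ x, ⟪v, x⟫ ∂ProbabilityTheory.stdGaussian E = 0 :=
    integral_strongDual_stdGaussian (innerSL ℝ v)
  have hvar := variance_eq_sub (memLp_inner_stdGaussian v)
  rw [← innerSL_apply_norm ℝ, ← variance_dual_stdGaussian]
  simpa [hmean] using hvar.symm

lemma integral_norm_sq_stdGaussian :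
    ∫ x, ‖x‖ ^ 2 ∂ProbabilityTheory.stdGaussian E = Module.finrank ℝ E := by
  let b := stdOrthonormalBasis ℝ E
  simp_rw [← b.sum_sq_inner_right]
  rw [integral_finsetSum _ fun i _ => (memLp_inner_stdGaussian (b i)).integrable_sq]
  simp [integral_inner_sq_stdGaussian, b.norm_eq_one]

lemma integral_norm_stdGaussian_le :
    ∫ x, ‖x‖ ∂ProbabilityTheory.stdGaussian E ≤ √(Module.finrank ℝ E) := by
  have hnorm : MemLp (fun x : E => ‖x‖) 2 (ProbabilityTheory.stdGaussian E) :=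
    IsGaussian.memLp_two_id.norm
  have h := variance_nonneg (fun x : E => ‖x‖) (ProbabilityTheory.stdGaussian E)
  rw [variance_eq_sub hnorm, sub_nonneg] at h
  simp only [Pi.pow_apply, integral_norm_sq_stdGaussian] at h
  exact Real.le_sqrt_of_sq_le h

end Gaussian

lemma smoothed_eq_smoothing (d : ℕ) (f : EuclideanSpace ℝ (Fin d) → ℝ) (u : ℝ) :
    smoothed d f u = smoothing (ProbabilityTheory.stdGaussian (EuclideanSpace ℝ (Fin d))) f u := by
  rw [← map_pi_eq_stdGaussian]
  rfl

theorem grad_smoothed_close (d : ℕ) (f : EuclideanSpace ℝ (Fin d) → ℝ) (L u : ℝ)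
    (hu : 0 < u) (hdiff : Differentiable ℝ f)
    (hf : ∀ x y, ‖gradient f x - gradient f y‖ ≤ L * ‖x - y‖) :
    ∀ x, ‖gradient f x - gradient (smoothed d f u) x‖ ≤ u * L * Real.sqrt d := by
  intro x
  obtain rfl | hd := Nat.eq_zero_or_pos d
  · simp [Subsingleton.elim (gradient f x - gradient (smoothed 0 f u) x) 0]
  have : Nonempty (Fin d) := ⟨⟨0, hd⟩⟩
  have hL : 0 ≤ L := nonneg_of_forall_norm_sub_le_mul_norm_sub hf
  simp_rw [norm_gradient_sub_gradient] at hf ⊢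
  have hf' : LipschitzWith L.toNNReal (fderiv ℝ f) :=
    .of_dist_le' (by simpa only [dist_eq_norm] using hf)
  rw [smoothed_eq_smoothing]
  calc _ ≤ L.toNNReal * |u| * ∫ z, ‖z‖ ∂ProbabilityTheory.stdGaussian _ :=
        norm_fderiv_sub_fderiv_smoothing_le hdiff hf' IsGaussian.memLp_two_id x
    _ ≤ u * L * √d := by
        rw [Real.coe_toNNReal _ hL, abs_of_pos hu, mul_comm L]
        gcongr
        simpa using integral_norm_stdGaussian_le (E := EuclideanSpace ℝ (Fin d))
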